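/- Let J, R, Q be real n×n matrices with Jᵀ = −J, R positive semidefinite, and Q positive semidefinite, and let M denote the matrix (J − R)Q viewed as a complex n×n matrix. Let λ ∈ ℂ with λ ≠ 0 and Re(λ) = 0, and suppose x₀, x₁ ∈ ℂⁿ satisfy Mx₀ = λx₀ and (M − λI)x₁ = x₀. Then x₀ = 0 (i.e., λ admits no Jordan chain of length 2). -/

import Mathlib

/-!
With `z = Q x₀`, the eigenvector equation gives `z⋆ (J - R) z = μ · x₀⋆ Q x₀`, where `x₀⋆ Q x₀` is
real and `z⋆ J z` is imaginary; since `Re μ = 0`, taking real parts gives `z⋆ R z = 0`, so `R z = 0`.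
Then `(J - R)ᴴ z = -J z = -μ x₀ = conj μ · x₀`, so `z⋆` is a left eigenvector of `(J - R) Q` for `μ`
and is therefore orthogonal to the range of `(J - R) Q - μ`, which contains `x₀`. Hence
`x₀⋆ Q x₀ = z⋆ x₀ = 0`, so `Q x₀ = 0` and `μ x₀ = (J - R) Q x₀ = 0`.
-/

open Matrix
open scoped ComplexOrder

/-- The complexification of a real matrix. -/
noncomputable def toC {n : ℕ} (A : Matrix (Fin n) (Fin n) ℝ) : Matrix (Fin n) (Fin n) ℂ :=
  A.map (fun a => (a : ℂ))

namespace Matrix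

variable {𝕜 n : Type*} [RCLike 𝕜] [Fintype n]

lemma star_star_dotProduct_mulVec (M : Matrix n n 𝕜) (x y : n → 𝕜) :
    star (star x ⬝ᵥ M *ᵥ y) = star y ⬝ᵥ Mᴴ *ᵥ x := by
  rw [← star_dotProduct, star_mulVec, dotProduct_mulVec]

lemma re_star_dotProduct_mulVec_self_eq_zero {J : Matrix n n 𝕜} (hJ : Jᴴ = -J) (z : n → 𝕜) :
    RCLike.re (star z ⬝ᵥ J *ᵥ z) = 0 := by
  have h := congrArg RCLike.re (star_star_dotProduct_mulVec J z z)
  rw [hJ, neg_mulVec, dotProduct_neg, map_neg, RCLike.star_def, RCLike.conj_re] at h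
  linarith

lemma PosSemidef.mulVec_eq_zero_of_re_dotProduct_eq_zero {R : Matrix n n 𝕜} (hR : R.PosSemidef)
    {z : n → 𝕜} (hz : RCLike.re (star z ⬝ᵥ R *ᵥ z) = 0) : R *ᵥ z = 0 :=
  (hR.dotProduct_mulVec_zero_iff z).mp <|
    RCLike.ext (by simpa using hz) (by simpa using hR.isHermitian.im_star_dotProduct_mulVec_self z)

lemma dotProduct_sub_smul_one_mulVec_eq_zero [DecidableEq n] {M : Matrix n n 𝕜} {μ : 𝕜}
    {w : n → 𝕜} (hw : w ᵥ* M = μ • w) (x : n → 𝕜) : w ⬝ᵥ (M - μ • 1) *ᵥ x = 0 := by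
  rw [dotProduct_mulVec, vecMul_sub, hw, vecMul_smul, vecMul_one, sub_self, zero_dotProduct]

section Dissipative

variable {J R Q : Matrix n n 𝕜} {μ : 𝕜} {x₀ : n → 𝕜}

lemma mulVec_mulVec_eq_zero_of_mulVec_eq_smul (hJ : Jᴴ = -J) (hR : R.PosSemidef)
    (hQ : Q.IsHermitian) (hμ : RCLike.re μ = 0) (h₀ : ((J - R) * Q) *ᵥ x₀ = μ • x₀) :
    R *ᵥ Q *ᵥ x₀ = 0 := by
  set z := Q *ᵥ x₀
  have hQx₀ : RCLike.im (star z ⬝ᵥ x₀) = 0 := by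
    rw [star_mulVec, hQ.eq, ← dotProduct_mulVec, hQ.im_star_dotProduct_mulVec_self]
  have hz : star z ⬝ᵥ (J - R) *ᵥ z = μ * (star z ⬝ᵥ x₀) := by
    rw [mulVec_mulVec, h₀, dotProduct_smul, smul_eq_mul]
  refine hR.mulVec_eq_zero_of_re_dotProduct_eq_zero ?_
  have hre := congrArg RCLike.re hz
  rw [sub_mulVec, dotProduct_sub, map_sub, re_star_dotProduct_mulVec_self_eq_zero hJ,
    RCLike.mul_re, hμ, hQx₀] at hre
  linarith

lemma vecMul_star_mulVec_eq_smul (hJ : Jᴴ = -J) (hR : R.IsHermitian) (hQ : Q.IsHermitian)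
    (hμ : RCLike.re μ = 0) (h₀ : ((J - R) * Q) *ᵥ x₀ = μ • x₀) (hRQ : R *ᵥ Q *ᵥ x₀ = 0) :
    star (Q *ᵥ x₀) ᵥ* ((J - R) * Q) = μ • star (Q *ᵥ x₀) := by
  have hJQ : J *ᵥ Q *ᵥ x₀ = μ • x₀ := by
    rw [← sub_zero (J *ᵥ _), ← hRQ, ← sub_mulVec, mulVec_mulVec, h₀]
  have hμ_star : star μ = -μ := RCLike.ext (by simp [hμ]) (by simp)
  have hAadj : (J - R)ᴴ *ᵥ Q *ᵥ x₀ = star μ • x₀ := by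
    rw [conjTranspose_sub, hJ, hR.eq, sub_mulVec, hRQ, sub_zero, neg_mulVec, hJQ, hμ_star,
      neg_smul]
  have hA : star (Q *ᵥ x₀) ᵥ* (J - R) = μ • star x₀ := by
    rw [← conjTranspose_conjTranspose (J - R), ← star_mulVec, hAadj, star_smul, star_star]
  rw [← vecMul_vecMul, hA, smul_vecMul, star_mulVec, hQ.eq]

lemma mulVec_eq_zero_of_jordan_chain [DecidableEq n] {x₁ : n → 𝕜} (hJ : Jᴴ = -J)
    (hR : R.PosSemidef) (hQ : Q.PosSemidef) (hμ : RCLike.re μ = 0)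
    (h₀ : ((J - R) * Q) *ᵥ x₀ = μ • x₀) (h₁ : ((J - R) * Q - μ • 1) *ᵥ x₁ = x₀) :
    Q *ᵥ x₀ = 0 := by
  have hRQ := mulVec_mulVec_eq_zero_of_mulVec_eq_smul hJ hR hQ.isHermitian hμ h₀
  have hleft := vecMul_star_mulVec_eq_smul hJ hR.isHermitian hQ.isHermitian hμ h₀ hRQ
  have h := dotProduct_sub_smul_one_mulVec_eq_zero hleft x₁
  rw [h₁, star_mulVec, hQ.isHermitian.eq, ← dotProduct_mulVec] at h
  exact (hQ.dotProduct_mulVec_zero_iff x₀).mp h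

end Dissipative

end Matrix

section toC

variable {n : ℕ}

lemma toC_mul (A B : Matrix (Fin n) (Fin n) ℝ) : toC (A * B) = toC A * toC B :=
  Matrix.map_mul (f := Complex.ofRealHom)

lemma toC_sub (A B : Matrix (Fin n) (Fin n) ℝ) : toC (A - B) = toC A - toC B :=
  Matrix.map_sub _ Complex.ofReal_sub A B

lemma toC_neg (A : Matrix (Fin n) (Fin n) ℝ) : toC (-A) = -toC A :=
  Matrix.map_neg _ Complex.ofReal_neg A

lemma conjTranspose_toC (A : Matrix (Fin n) (Fin n) ℝ) : (toC A)ᴴ = toC Aᵀ := by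
  ext i j
  simp [toC]

open scoped MatrixOrder in
lemma toC_posSemidef {A : Matrix (Fin n) (Fin n) ℝ} (hA : A.PosSemidef) : (toC A).PosSemidef := by
  obtain ⟨B, rfl⟩ := CStarAlgebra.nonneg_iff_eq_star_mul_self.mp hA.nonneg
  rw [star_eq_conjTranspose, toC_mul, conjTranspose_eq_transpose_of_trivial, ← conjTranspose_toC]
  exact posSemidef_conjTranspose_mul_self _

end toC

theorem no_jordan_chain_of_length_two {n : ℕ} (J R Q : Matrix (Fin n) (Fin n) ℝ)
    (hJ : Jᵀ = -J) (hR : R.PosSemidef) (hQ : Q.PosSemidef)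
    (μ : ℂ) (hμ0 : μ ≠ 0) (hμ : μ.re = 0) (x₀ x₁ : Fin n → ℂ)
    (h₀ : toC ((J - R) * Q) *ᵥ x₀ = μ • x₀)
    (h₁ : (toC ((J - R) * Q) - μ • 1) *ᵥ x₁ = x₀) :
    x₀ = 0 := by
  rw [toC_mul, toC_sub] at h₀ h₁
  have hQx₀ : toC Q *ᵥ x₀ = 0 := mulVec_eq_zero_of_jordan_chain
    (by rw [conjTranspose_toC, hJ, toC_neg]) (toC_posSemidef hR) (toC_posSemidef hQ) hμ h₀ h₁
  rw [← mulVec_mulVec, hQx₀, mulVec_zero] at h₀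
  exact (smul_eq_zero.mp h₀.symm).resolve_left hμ0
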